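/- (Proposition 1, linear convergence of Randomized Kaczmarz on consistent systems.) Let X ∈ ℂ^{m×n} be a nonzero matrix with no zero rows, and suppose the system X β = y is consistent with minimum-norm solution β⋆ (the unique solution lying in range(X*)). Consider the Randomized Kaczmarz iteration: β₀ = 0, and at each step t ≥ 1 independently draw a row index i_t ∈ {1,…,m} with probability ‖X^i‖²/‖X‖_F² and set β_t = β_{t−1} + ((y_{i_t} − X^{i_t} β_{t−1})/‖X^{i_t}‖²)(X^{i_t})*. Then for every t ≥ 0, 𝔼‖β_t − β⋆‖² ≤ α_X^t ‖β⋆‖², where α_X := 1 − σ_min(X)²/‖X‖_F². -/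

import Mathlib

open Matrix Finset

noncomputable section

/-- Squared Euclidean norm of a complex vector. -/
def vnsq {n : ℕ} (x : Fin n → ℂ) : ℝ := ∑ i, ‖x i‖ ^ 2

/-- Squared Frobenius norm of a complex matrix. -/
def froSq {m n : ℕ} (A : Matrix (Fin m) (Fin n) ℂ) : ℝ := ∑ i, vnsq (A i)

/-- Square of the smallest nonzero singular value of `A`: the infimum of `‖A x‖²`
over unit vectors `x` in the row space of `A`. -/
def sMinSq {m n : ℕ} (A : Matrix (Fin m) (Fin n) ℂ) : ℝ :=
  sInf {r : ℝ | ∃ u : Fin m → ℂ, vnsq (Aᴴ.mulVec u) = 1 ∧ r = vnsq (A.mulVec (Aᴴ.mulVec u))}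

/-- Square of the largest singular value of `A`. -/
def sMaxSq {m n : ℕ} (A : Matrix (Fin m) (Fin n) ℂ) : ℝ :=
  sSup {r : ℝ | ∃ x : Fin n → ℂ, vnsq x = 1 ∧ r = vnsq (A.mulVec x)}

/-- `α_A := 1 - σ_min(A)²/‖A‖_F²`. -/
def alphaOf {m n : ℕ} (A : Matrix (Fin m) (Fin n) ℂ) : ℝ := 1 - sMinSq A / froSq A

/-- Expectation of `g` of the state after `t` steps of a Markov chain whose step at each
time uses an independent draw from the finite set `D` with probability weights `w`,
started at `init`, with transition `step`. -/
def markovExp {S D : Type*} [Fintype D] (w : D → ℝ) (step : D → S → S) (init : S) :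
    ℕ → (S → ℝ) → ℝ
  | 0, g => g init
  | t + 1, g => markovExp w step init t (fun s => ∑ d, w d * g (step d s))


lemma vnsq_nonneg {n : ℕ} (x : Fin n → ℂ) : 0 ≤ vnsq x :=
  Finset.sum_nonneg fun i _ => by positivity


lemma vnsq_eq_zero {n : ℕ} {x : Fin n → ℂ} : vnsq x = 0 ↔ x = 0 := by
  constructor
  · intro h
    funext i
    have := (Finset.sum_eq_zero_iff_of_nonneg (fun i _ => by positivity)).1 h i (mem_univ i)
    simpa using this
  · intro h; simp [h, vnsq]


lemma vnsq_smul {n : ℕ} (c : ℂ) (x : Fin n → ℂ) : vnsq (c • x) = ‖c‖^2 * vnsq x := by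
  simp [vnsq, Finset.mul_sum, mul_pow]


lemma vnsq_neg {n : ℕ} (x : Fin n → ℂ) : vnsq (-x) = vnsq x := by simp [vnsq]


lemma vnsq_normSq {n : ℕ} (x : Fin n → ℂ) : vnsq x = ∑ i, Complex.normSq (x i) := by
  simp [vnsq, ← Complex.sq_norm]


lemma row_cauchy {m n : ℕ} (X : Matrix (Fin m) (Fin n) ℂ) (v : Fin n → ℂ) (i : Fin m) :
    ‖X.mulVec v i‖ ^ 2 ≤ vnsq (X i) * vnsq v := by
  have h1 : ‖X.mulVec v i‖ ≤ ∑ j, ‖X i j‖ * ‖v j‖ := by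
    have hmv : X.mulVec v i = ∑ j, X i j * v j := rfl
    rw [hmv]
    refine (norm_sum_le _ _).trans ?_
    exact Finset.sum_le_sum fun j _ => by rw [norm_mul]
  have h2 : (∑ j, ‖X i j‖ * ‖v j‖) ^ 2 ≤ (∑ j, ‖X i j‖^2) * (∑ j, ‖v j‖^2) :=
    Finset.sum_mul_sq_le_sq_mul_sq _ _ _
  calc ‖X.mulVec v i‖ ^ 2 ≤ (∑ j, ‖X i j‖ * ‖v j‖) ^ 2 := by
        apply pow_le_pow_left₀ (norm_nonneg _) h1
    _ ≤ _ := h2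


lemma proj_step {m n : ℕ} (X : Matrix (Fin m) (Fin n) ℂ) (i : Fin m)
    (hi : X i ≠ 0) (e : Fin n → ℂ) :
    vnsq (fun j => e j - X.mulVec e i / (vnsq (X i) : ℂ) * star (X i j))
      = vnsq e - ‖X.mulVec e i‖ ^ 2 / vnsq (X i) := by
  have hw : vnsq (X i) ≠ 0 := fun h => hi (vnsq_eq_zero.1 h)
  set s := X.mulVec e i with hs
  set w : ℝ := vnsq (X i) with hwdef
  have hXi : ∑ j, Complex.normSq (X i j) = w := (vnsq_normSq (X i)).symm
  rw [vnsq_normSq]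
  have expand : ∀ j, Complex.normSq (e j - s / (w:ℂ) * star (X i j))
      = Complex.normSq (e j) + Complex.normSq (s / (w:ℂ)) * Complex.normSq (X i j)
        - 2 * ((starRingEnd ℂ) (s / (w:ℂ)) * (e j * X i j)).re := by
    intro j
    rw [Complex.normSq_sub, Complex.normSq_mul]
    have h1 : Complex.normSq (star (X i j)) = Complex.normSq (X i j) := by
      simpa [Complex.star_def] using Complex.normSq_conj (X i j)
    have h2 : (starRingEnd ℂ) (s / (w:ℂ) * star (X i j))
        = (starRingEnd ℂ) (s/(w:ℂ)) * X i j := by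
      simp [_root_.map_mul, Complex.star_def]
    rw [h1, h2, mul_left_comm]
  have hsum : ∑ j, e j * X i j = s := by
    rw [hs]; simp [Matrix.mulVec, dotProduct, mul_comm]
  calc ∑ j, Complex.normSq (e j - s / (w:ℂ) * star (X i j))
      = ∑ j, (Complex.normSq (e j) + Complex.normSq (s / (w:ℂ)) * Complex.normSq (X i j)
        - 2 * ((starRingEnd ℂ) (s / (w:ℂ)) * (e j * X i j)).re) :=
        Finset.sum_congr rfl fun j _ => expand j
    _ = (∑ j, Complex.normSq (e j)) + Complex.normSq (s / (w:ℂ)) * w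
        - 2 * ((starRingEnd ℂ) (s / (w:ℂ)) * s).re := by
        rw [Finset.sum_sub_distrib, Finset.sum_add_distrib, ← Finset.mul_sum, hXi,
          ← Finset.mul_sum, ← Complex.re_sum, ← Finset.mul_sum, hsum]
    _ = vnsq e + (‖s‖^2 / w^2) * w - 2 * (‖s‖^2 / w) := by
        rw [← vnsq_normSq]
        congr 2
        · rw [Complex.normSq_div, Complex.normSq_ofReal, ← Complex.sq_norm,
            ← sq]
        · rw [map_div₀, Complex.conj_ofReal, div_mul_eq_mul_div,
            ← Complex.normSq_eq_conj_mul_self, ← Complex.sq_norm,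
            ← Complex.ofReal_div, Complex.ofReal_re]
    _ = vnsq e - ‖s‖ ^ 2 / w := by field_simp; ring


lemma sMinSq_bddBelow {m n : ℕ} (A : Matrix (Fin m) (Fin n) ℂ) :
    BddBelow {r : ℝ | ∃ u : Fin m → ℂ, vnsq (Aᴴ.mulVec u) = 1 ∧ r = vnsq (A.mulVec (Aᴴ.mulVec u))} :=
  ⟨0, fun r ⟨u, _, hr⟩ => hr ▸ vnsq_nonneg _⟩


lemma sMinSq_le_ratio {m n : ℕ} (X : Matrix (Fin m) (Fin n) ℂ) (u : Fin m → ℂ)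
    (hu : Xᴴ.mulVec u ≠ 0) :
    sMinSq X ≤ vnsq (X.mulVec (Xᴴ.mulVec u)) / vnsq (Xᴴ.mulVec u) := by
  set e := Xᴴ.mulVec u with he
  set r := vnsq e with hr
  have hrpos : 0 < r := lt_of_le_of_ne (vnsq_nonneg e) (fun h => hu (vnsq_eq_zero.1 h.symm))
  set c : ℂ := (((Real.sqrt r)⁻¹ : ℝ) : ℂ) with hc
  have hcn : ‖c‖ ^ 2 = r⁻¹ := by
    rw [hc, Complex.norm_real, Real.norm_eq_abs, abs_of_nonneg (by positivity), inv_pow,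
      Real.sq_sqrt hrpos.le]
  apply csInf_le (sMinSq_bddBelow X)
  refine ⟨c • u, ?_, ?_⟩
  · rw [Matrix.mulVec_smul, ← he, vnsq_smul, hcn, ← hr, inv_mul_cancel₀ hrpos.ne']
  · rw [Matrix.mulVec_smul, ← he, Matrix.mulVec_smul, vnsq_smul, hcn,
      div_eq_inv_mul, hr]


lemma sMinSq_key {m n : ℕ} (X : Matrix (Fin m) (Fin n) ℂ) (u : Fin m → ℂ) :
    sMinSq X * vnsq (Xᴴ.mulVec u) ≤ vnsq (X.mulVec (Xᴴ.mulVec u)) := by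
  by_cases hu : Xᴴ.mulVec u = 0
  · simp [hu, vnsq_eq_zero.2 rfl, Matrix.mulVec_zero]
  · have hrpos : 0 < vnsq (Xᴴ.mulVec u) :=
      lt_of_le_of_ne (vnsq_nonneg _) (fun h => hu (vnsq_eq_zero.1 h.symm))
    have := mul_le_mul_of_nonneg_right (sMinSq_le_ratio X u hu) hrpos.le
    rwa [div_mul_cancel₀ _ hrpos.ne'] at this


lemma mulVec_vnsq_le {m n : ℕ} (X : Matrix (Fin m) (Fin n) ℂ) (v : Fin n → ℂ) :
    vnsq (X.mulVec v) ≤ froSq X * vnsq v := by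
  rw [vnsq, froSq, Finset.sum_mul]
  exact Finset.sum_le_sum fun i _ => row_cauchy X v i


lemma markovExp_mono {S D : Type*} [Fintype D] (w : D → ℝ) (hw : ∀ d, 0 ≤ w d)
    (step : D → S → S) (init : S) (P : S → Prop) (hinit : P init)
    (hstep : ∀ d s, P s → P (step d s)) :
    ∀ (t : ℕ) (g h : S → ℝ), (∀ s, P s → g s ≤ h s) →
      markovExp w step init t g ≤ markovExp w step init t h
  | 0, g, h, hgh => hgh init hinit
  | (t+1), g, h, hgh => by
      simp only [markovExp]
      exact markovExp_mono w hw step init P hinit hstep t _ _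
        (fun s hs => Finset.sum_le_sum fun d _ =>
          mul_le_mul_of_nonneg_left (hgh _ (hstep d s hs)) (hw d))


lemma markovExp_const_mul {S D : Type*} [Fintype D] (w : D → ℝ) (step : D → S → S)
    (init : S) (c : ℝ) :
    ∀ (t : ℕ) (g : S → ℝ),
      markovExp w step init t (fun s => c * g s) = c * markovExp w step init t g
  | 0, g => rfl
  | (t+1), g => by
      simp only [markovExp]
      rw [← markovExp_const_mul w step init c t (fun s => ∑ d, w d * g (step d s))]
      congr 1
      funext s
      rw [Finset.mul_sum]
      exact Finset.sum_congr rfl fun d _ => by ring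


lemma markovExp_decay {S D : Type*} [Fintype D] (w : D → ℝ) (hw : ∀ d, 0 ≤ w d)
    (step : D → S → S) (init : S) (P : S → Prop) (hinit : P init)
    (hstep : ∀ d s, P s → P (step d s)) (f : S → ℝ) (α : ℝ) (hα : 0 ≤ α)
    (hdec : ∀ s, P s → ∑ d, w d * f (step d s) ≤ α * f s) :
    ∀ t : ℕ, markovExp w step init t f ≤ α ^ t * f init
  | 0 => by simp [markovExp]
  | (t+1) => by
      simp only [markovExp]
      calc markovExp w step init t (fun s => ∑ d, w d * f (step d s))
          ≤ markovExp w step init t (fun s => α * f s) :=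
            markovExp_mono w hw step init P hinit hstep t _ _ hdec
        _ = α * markovExp w step init t f := markovExp_const_mul w step init α t f
        _ ≤ α * (α ^ t * f init) :=
            mul_le_mul_of_nonneg_left
              (markovExp_decay w hw step init P hinit hstep f α hα hdec t) hα
        _ = α ^ (t+1) * f init := by ring


lemma single_mulVec {m n : ℕ} (X : Matrix (Fin m) (Fin n) ℂ) (i : Fin m) :
    Xᴴ.mulVec (Pi.single i 1) = fun j => star (X i j) := by
  funext j
  simp [Matrix.mulVec, dotProduct, Matrix.conjTranspose_apply, Pi.single_apply,
    Finset.sum_ite_eq', mul_comm]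


/-- **Proposition 1 (linear convergence of Randomized Kaczmarz on consistent systems).**
`X` nonzero with no zero rows, `y = X β⋆` with `β⋆` the minimum-norm solution
(`β⋆ ∈ range(Xᴴ)`).  The RK iteration starts at `β₀ = 0` and at each step draws a row
`i` with probability `‖X^i‖²/‖X‖_F²` and projects onto it.  Then
`𝔼‖β_t − β⋆‖² ≤ α_X^t ‖β⋆‖²`. -/
theorem rk_convergence
    (m n : ℕ) (X : Matrix (Fin m) (Fin n) ℂ)
    (hX : X ≠ 0) (hrows : ∀ i, X i ≠ 0)
    (βs : Fin n → ℂ) (y : Fin m → ℂ)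
    (hβs : ∃ w : Fin m → ℂ, Xᴴ.mulVec w = βs)   -- β⋆ ∈ range(Xᴴ)
    (hy : y = X.mulVec βs)                       -- consistency: y = X β⋆
    (t : ℕ) :
    markovExp
      (fun i : Fin m => vnsq (X i) / froSq X)
      (fun i β => fun j =>
        β j + (y i - X.mulVec β i) / (vnsq (X i) : ℂ) * star (X i j))
      (0 : Fin n → ℂ)
      t
      (fun β => vnsq (β - βs))
    ≤ (alphaOf X) ^ t * vnsq βs := by
  obtain ⟨w₀, hw₀⟩ := hβs
  -- basic positivity facts
  have hex : ∃ i, X i ≠ 0 := by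
    by_contra h
    push_neg at h
    exact hX (by funext i j; simp [h i])
  obtain ⟨i₀, hi₀⟩ := hex
  have hF : 0 < froSq X := by
    have h1 : 0 < vnsq (X i₀) :=
      lt_of_le_of_ne (vnsq_nonneg _) (fun h => hi₀ (vnsq_eq_zero.1 h.symm))
    exact lt_of_lt_of_le h1 (Finset.single_le_sum (fun i _ => vnsq_nonneg (X i)) (mem_univ i₀))
  -- α ≥ 0
  have he₀ : Xᴴ.mulVec (Pi.single i₀ 1) ≠ 0 := by
    rw [single_mulVec]
    intro h
    apply hi₀
    funext j
    have := congrFun h j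
    simpa using this
  have heps : 0 < vnsq (Xᴴ.mulVec (Pi.single i₀ 1)) :=
    lt_of_le_of_ne (vnsq_nonneg _) (fun h => he₀ (vnsq_eq_zero.1 h.symm))
  have hsmin_le : sMinSq X ≤ froSq X := by
    refine (sMinSq_le_ratio X (Pi.single i₀ 1) he₀).trans ?_
    rw [div_le_iff₀ heps]
    exact mulVec_vnsq_le X _
  have hα : 0 ≤ alphaOf X := by
    rw [alphaOf, sub_nonneg, div_le_one hF]
    exact hsmin_le
  -- apply the decay lemma
  have main := markovExp_decay
    (fun i : Fin m => vnsq (X i) / froSq X)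
    (fun i => div_nonneg (vnsq_nonneg _) hF.le)
    (fun i β => fun j =>
      β j + (y i - X.mulVec β i) / (vnsq (X i) : ℂ) * star (X i j))
    (0 : Fin n → ℂ)
    (fun β => ∃ u : Fin m → ℂ, Xᴴ.mulVec u = β - βs)
    ⟨-w₀, by rw [Matrix.mulVec_neg, hw₀, zero_sub]⟩
    ?hstep
    (fun β => vnsq (β - βs))
    (alphaOf X) hα ?hdec t
  · calc _ ≤ (alphaOf X) ^ t * vnsq ((0 : Fin n → ℂ) - βs) := main
      _ = (alphaOf X) ^ t * vnsq βs := by rw [zero_sub, vnsq_neg]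
  case hstep =>
    rintro i β ⟨u, hu⟩
    refine ⟨u + ((y i - X.mulVec β i) / (vnsq (X i) : ℂ)) • (Pi.single i 1 : Fin m → ℂ), ?_⟩
    rw [Matrix.mulVec_add, Matrix.mulVec_smul, hu, _root_.single_mulVec]
    funext j
    simp only [Pi.add_apply, Pi.sub_apply, Pi.smul_apply, smul_eq_mul]
    ring
  case hdec =>
    rintro β ⟨u, hu⟩
    set e : Fin n → ℂ := β - βs with hedef
    have hstep_eq : ∀ i : Fin m,
        (fun j => β j + (y i - X.mulVec β i) / (vnsq (X i) : ℂ) * star (X i j)) - βs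
          = fun j => e j - X.mulVec e i / (vnsq (X i) : ℂ) * star (X i j) := by
      intro i
      funext j
      have hXe : X.mulVec e i = X.mulVec β i - X.mulVec βs i := by
        rw [hedef, Matrix.mulVec_sub]; rfl
      simp only [Pi.sub_apply, hy, hedef]
      rw [hXe]
      ring
    have hfe : ∀ i : Fin m,
        vnsq ((fun j => β j + (y i - X.mulVec β i) / (vnsq (X i) : ℂ) * star (X i j)) - βs)
          = vnsq e - ‖X.mulVec e i‖ ^ 2 / vnsq (X i) := by
      intro i
      rw [hstep_eq i]
      exact proj_step X i (hrows i) e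
    have hkey : sMinSq X * vnsq e ≤ vnsq (X.mulVec e) := by
      have := sMinSq_key X u
      rwa [hu] at this
    calc ∑ i, vnsq (X i) / froSq X *
          vnsq ((fun j => β j + (y i - X.mulVec β i) / (vnsq (X i) : ℂ) * star (X i j)) - βs)
        = ∑ i, (vnsq (X i) / froSq X * vnsq e - ‖X.mulVec e i‖ ^ 2 / froSq X) := by
          refine Finset.sum_congr rfl fun i _ => ?_
          rw [hfe i]
          have hwi : vnsq (X i) ≠ 0 := fun h => hrows i (vnsq_eq_zero.1 h)
          field_simp
      _ = vnsq e - vnsq (X.mulVec e) / froSq X := by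
          rw [Finset.sum_sub_distrib, ← Finset.sum_mul, ← Finset.sum_div, ← Finset.sum_div]
          have h1 : (∑ i, vnsq (X i)) = froSq X := rfl
          have h2 : (∑ i, ‖X.mulVec e i‖ ^ 2) = vnsq (X.mulVec e) := rfl
          rw [h1, h2, div_self hF.ne', one_mul]
      _ ≤ vnsq e - sMinSq X * vnsq e / froSq X := by
          have := (div_le_div_iff_of_pos_right hF).2 hkey
          linarith
      _ = alphaOf X * vnsq e := by rw [alphaOf]; ring
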